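/- Let 1 < p < ∞. Let Ω ⊂ X be open and suppose μ̃ ≥ μ is a Borel regular outer measure on X that is doubling within a ball 2B₀, where Ω ⊂ B₀. Suppose E ⊂ Ω satisfies ℋ̃^p(E) < ∞ (codimension-p Hausdorff measure with respect to μ̃). Then Mod_p(Γ) = 0 for the family Γ := {curves γ with image in Ω : the image of γ contains infinitely many points of E}. -/

import Mathlib

open Set Metric MeasureTheory Filter ENNReal NNReal TopologicalSpace

noncomputable section

/-- A rectifiable curve parametrized by arc length: a `1`-Lipschitz map
`γ : [0, len] → X` such that the length (variation) of `γ` on `[0, t]` equals `t`. -/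
structure Curve (X : Type*) [MetricSpace X] where
  len : ℝ
  len_nonneg : 0 ≤ len
  toFun : ℝ → X
  lipschitz : LipschitzOnWith 1 toFun (Set.Icc 0 len)
  arclength : ∀ t ∈ Set.Icc (0 : ℝ) len,
    eVariationOn toFun (Set.Icc 0 t) = ENNReal.ofReal t

/-- The curve `γ` lies in the set `A`. -/
def Curve.In {X : Type*} [MetricSpace X] (γ : Curve X) (A : Set X) : Prop :=
  ∀ t ∈ Set.Icc (0 : ℝ) γ.len, γ.toFun t ∈ A

/-- The image of a curve. -/
def Curve.image {X : Type*} [MetricSpace X] (γ : Curve X) : Set X :=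
  γ.toFun '' Set.Icc (0 : ℝ) γ.len

/-- The curve integral `∫_γ ρ ds := ∫_0^{ℓ_γ} ρ(γ(s)) ds`. -/
def curveLintegral {X : Type*} [MetricSpace X] (ρ : X → ℝ≥0∞) (γ : Curve X) : ℝ≥0∞ :=
  ∫⁻ s in Set.Icc (0 : ℝ) γ.len, ρ (γ.toFun s)

/-- The `p`-modulus of a family of curves. -/
def pModulus {X : Type*} [MetricSpace X] [MeasurableSpace X] (p : ℝ) (μ : Measure X)
    (Γ : Set (Curve X)) : ℝ≥0∞ :=
  ⨅ (ρ : X → ℝ≥0∞) (_ : Measurable ρ) (_ : ∀ γ ∈ Γ, 1 ≤ curveLintegral ρ γ),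
    ∫⁻ x, ρ x ^ p ∂μ

/-- `g` is an upper gradient of `f` in `Ω`. -/
def IsUpperGradientOn {X Y : Type*} [MetricSpace X] [MetricSpace Y]
    (f : X → Y) (g : X → ℝ≥0∞) (Ω : Set X) : Prop :=
  ∀ γ : Curve X, γ.In Ω →
    edist (f (γ.toFun 0)) (f (γ.toFun γ.len)) ≤ curveLintegral g γ

/-- `g` is a `p`-weak upper gradient of `f` in `Ω`: the upper gradient inequality
holds for `p`-a.e. curve in `Ω`. -/
def IsWeakUpperGradientOn {X Y : Type*} [MetricSpace X] [MeasurableSpace X] [MetricSpace Y]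
    (p : ℝ) (μ : Measure X) (f : X → Y) (g : X → ℝ≥0∞) (Ω : Set X) : Prop :=
  pModulus p μ {γ : Curve X | γ.In Ω ∧
    ¬ edist (f (γ.toFun 0)) (f (γ.toFun γ.len)) ≤ curveLintegral g γ} = 0

/-- `f` belongs to the Dirichlet class `D^p(Ω; Y)`: it has an upper gradient in `L^p(Ω, μ)`. -/
def MemDirichlet {X Y : Type*} [MetricSpace X] [MeasurableSpace X] [MetricSpace Y]
    (p : ℝ) (μ : Measure X) (f : X → Y) (Ω : Set X) : Prop :=
  ∃ g : X → ℝ≥0∞, Measurable g ∧ IsUpperGradientOn f g Ω ∧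
    ∫⁻ x in Ω, g x ^ p ∂μ < ⊤

/-- `μt` is doubling with constant `Cd` within the open set `W`. -/
def DoublingWithinC {X : Type*} [MetricSpace X] [MeasurableSpace X]
    (μt : Measure X) (Cd : ℝ≥0) (W : Set X) : Prop :=
  ∀ (x : X) (r : ℝ), 0 < r → Metric.ball x r ⊆ W →
    0 < μt (Metric.ball x (2 * r)) ∧
      μt (Metric.ball x (2 * r)) ≤ Cd * μt (Metric.ball x r) ∧
      μt (Metric.ball x (2 * r)) < ⊤

/-- `μt` is doubling (with some constant) within the open set `W`. -/
def DoublingWithin {X : Type*} [MetricSpace X] [MeasurableSpace X]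
    (μt : Measure X) (W : Set X) : Prop :=
  ∃ Cd : ℝ≥0, DoublingWithinC μt Cd W

/-- `L_f(x,r) = sup { d_Y(f(y), f(x)) : y ∈ Ω, d(y,x) ≤ r }`. -/
def eL {X Y : Type*} [MetricSpace X] [MetricSpace Y]
    (f : X → Y) (Ω : Set X) (x : X) (r : ℝ) : ℝ≥0∞ :=
  ⨆ (y : X) (_ : y ∈ Ω) (_ : dist y x ≤ r), edist (f y) (f x)

/-- `l_f(x,r) = inf { d_Y(f(y), f(x)) : y ∈ Ω, d(y,x) ≥ r }`. -/
def el {X Y : Type*} [MetricSpace X] [MetricSpace Y]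
    (f : X → Y) (Ω : Set X) (x : X) (r : ℝ) : ℝ≥0∞ :=
  ⨅ (y : X) (_ : y ∈ Ω) (_ : r ≤ dist y x), edist (f y) (f x)

/-- `H_f(x,r) = L_f(x,r)/l_f(x,r)`, interpreted as `∞` when the denominator is zero. -/
def eH {X Y : Type*} [MetricSpace X] [MetricSpace Y]
    (f : X → Y) (Ω : Set X) (x : X) (r : ℝ) : ℝ≥0∞ :=
  if el f Ω x r = 0 then ⊤ else eL f Ω x r / el f Ω x r

/-- `h_f(x) = liminf_{r → 0} H_f(x,r)`. -/
def hDil {X Y : Type*} [MetricSpace X] [MetricSpace Y]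
    (f : X → Y) (Ω : Set X) (x : X) : ℝ≥0∞ :=
  Filter.liminf (fun r : ℝ => eH f Ω x r) (nhdsWithin 0 (Set.Ioi 0))

/-- `lip_f(x) = liminf_{r → 0} sup_{y ∈ B(x,r)} d_Y(f(y), f(x)) / r` (within `Ω`). -/
def elip {X Y : Type*} [MetricSpace X] [MetricSpace Y]
    (f : X → Y) (Ω : Set X) (x : X) : ℝ≥0∞ :=
  Filter.liminf
    (fun r : ℝ =>
      (⨆ (y : X) (_ : y ∈ Ω ∩ Metric.ball x r), edist (f y) (f x)) / ENNReal.ofReal r)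
    (nhdsWithin 0 (Set.Ioi 0))

/-- `f` is a homeomorphism from `Ω` onto `f(Ω)`. -/
def IsHomeoOn {X Y : Type*} [TopologicalSpace X] [TopologicalSpace Y]
    (f : X → Y) (Ω : Set X) : Prop :=
  ContinuousOn f Ω ∧ ∃ g : Y → X, ContinuousOn g (f '' Ω) ∧ ∀ x ∈ Ω, g (f x) = x

/-- The restricted codimension-`p` Hausdorff content with respect to `μt`. -/
def codimHContent {X : Type*} [MetricSpace X] [MeasurableSpace X]
    (μt : Measure X) (p R : ℝ) (A : Set X) : ℝ≥0∞ :=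
  ⨅ (I : Set (X × ℝ)) (_ : I.Countable) (_ : ∀ b ∈ I, 0 < b.2 ∧ b.2 ≤ R)
    (_ : A ⊆ ⋃ b ∈ I, Metric.ball b.1 b.2),
    ∑' b : I, μt (Metric.ball b.1.1 b.1.2) / ENNReal.ofReal (b.1.2 ^ p)

/-- The codimension-`p` Hausdorff measure with respect to `μt`. -/
def codimH {X : Type*} [MetricSpace X] [MeasurableSpace X]
    (μt : Measure X) (p : ℝ) (A : Set X) : ℝ≥0∞ :=
  ⨆ (R : ℝ) (_ : 0 < R), codimHContent μt p R A

/-- `E` has σ-finite codimension-`p` Hausdorff measure with respect to `μt`. -/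
def SigmaFiniteCodimH {X : Type*} [MetricSpace X] [MeasurableSpace X]
    (μt : Measure X) (p : ℝ) (E : Set X) : Prop :=
  ∃ Ek : ℕ → Set X, E ⊆ ⋃ k, Ek k ∧ ∀ k, codimH μt p (Ek k) < ⊤

/-- `μ₀` is a Vitali measure: every fine covering (by closed balls, recorded as
center–radius pairs of positive radius) of any set `A` admits a pairwise disjoint
subcollection covering `μ₀`-almost all of `A`. -/
def IsVitaliMeasure {Z : Type*} [MetricSpace Z] [MeasurableSpace Z] (μ₀ : Measure Z) : Prop :=
  ∀ (A : Set Z) (F : Set (Z × ℝ)), (∀ b ∈ F, 0 < b.2) →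
    (∀ x ∈ A, ∀ ε : ℝ, 0 < ε → ∃ r : ℝ, 0 < r ∧ r < ε ∧ (x, r) ∈ F) →
    ∃ G ⊆ F, (G.PairwiseDisjoint fun b => Metric.closedBall b.1 b.2) ∧
      μ₀ (A \ ⋃ b ∈ G, Metric.closedBall b.1 b.2) = 0

/-- Ahlfors `Q`-regularity. -/
def AhlforsRegular {Z : Type*} [MetricSpace Z] [MeasurableSpace Z]
    (μ : Measure Z) (Q : ℝ) : Prop :=
  ∃ C : ℝ≥0, 1 ≤ C ∧ ∀ (x : Z) (r : ℝ), 0 < r →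
    ENNReal.ofReal r < EMetric.diam (Set.univ : Set Z) →
    ENNReal.ofReal (r ^ Q) / C ≤ μ (Metric.ball x r) ∧
      μ (Metric.ball x r) ≤ C * ENNReal.ofReal (r ^ Q)

/-- The set `A` is metric doubling with constant `M`: each ball in `A` of radius `r`
can be covered by `M` balls in `A` of radius `r/2`. -/
def MetricDoublingWith {X : Type*} [MetricSpace X] (A : Set X) (M : ℕ) : Prop :=
  ∀ x ∈ A, ∀ r : ℝ, 0 < r → ∃ T : Finset X, ↑T ⊆ A ∧ T.card ≤ M ∧
    A ∩ Metric.ball x r ⊆ ⋃ y ∈ T, Metric.ball y (r / 2)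

end

lemma aux_rpow_sum_le (a b : ℝ≥0∞) {p : ℝ} (hp : 0 ≤ p) :
    (a + b) ^ p ≤ 2 ^ p * (a ^ p + b ^ p) := by
  calc (a + b) ^ p ≤ (2 * (a ⊔ b)) ^ p := by
        apply ENNReal.rpow_le_rpow _ hp
        rw [two_mul]
        exact add_le_add le_sup_left le_sup_right
    _ = 2 ^ p * (a ⊔ b) ^ p := ENNReal.mul_rpow_of_nonneg _ _ hp
    _ ≤ 2 ^ p * (a ^ p + b ^ p) := by
        apply mul_le_mul_right
        rcases le_total a b with h | h
        · rw [sup_eq_right.2 h]; exact le_add_self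
        · rw [sup_eq_left.2 h]; exact le_self_add

lemma aux_abscont {α : Type*} [MeasurableSpace α] (μ : Measure α) (f : α → ℝ≥0∞)
    (hf : Measurable f) (hfin : ∫⁻ x, f x ∂μ ≠ ⊤) :
    ∃ δ : ℝ≥0∞, 0 < δ ∧ ∀ S : Set α, MeasurableSet S → μ S < δ →
      ∫⁻ x in S, f x ∂μ ≤ 1 := by
  set T := ∫⁻ x, f x ∂μ with hT
  by_cases hT1 : T ≤ 1
  · exact ⟨1, zero_lt_one, fun S _ _ => le_trans (setLIntegral_le_lintegral S f) hT1⟩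
  push_neg at hT1
  have hae := ae_lt_top hf hfin
  have hmono : Monotone (fun (n : ℕ) (x : α) => min (f x) n) := by
    intro m n hmn x
    exact min_le_min le_rfl (by exact_mod_cast Nat.cast_le.2 hmn)
  have hsup : ⨆ n : ℕ, ∫⁻ x, min (f x) n ∂μ = T := by
    rw [← lintegral_iSup (fun n => hf.min measurable_const) hmono]
    apply lintegral_congr_ae
    filter_upwards [hae] with x hx
    apply le_antisymm (iSup_le fun n => min_le_left _ _)
    obtain ⟨n, hn⟩ := ENNReal.exists_nat_gt hx.ne
    calc f x = min (f x) n := (min_eq_left hn.le).symm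
      _ ≤ ⨆ n : ℕ, min (f x) n := le_iSup (fun n : ℕ => min (f x) (n : ℝ≥0∞)) n
  have h2 : T - 2⁻¹ < ⨆ n : ℕ, ∫⁻ x, min (f x) n ∂μ := by
    rw [hsup]
    exact ENNReal.sub_lt_self hfin (zero_lt_one.trans hT1).ne' (by norm_num)
  rw [lt_iSup_iff] at h2
  obtain ⟨n, hn⟩ := h2
  set a := ∫⁻ x, min (f x) n ∂μ with ha
  have hmin_meas : Measurable fun x => min (f x) (n : ℝ≥0∞) := hf.min measurable_const
  have hadd : a + ∫⁻ x, (f x - min (f x) n) ∂μ = T := by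
    rw [← lintegral_add_left hmin_meas]
    apply lintegral_congr
    intro x
    exact add_tsub_cancel_of_le (min_le_left _ _)
  have haT : a ≠ ∞ := ne_top_of_le_ne_top hfin (hadd ▸ le_self_add)
  have hrem : ∫⁻ x, (f x - min (f x) n) ∂μ ≤ 2⁻¹ := by
    have h3 : a + ∫⁻ x, (f x - min (f x) n) ∂μ ≤ a + 2⁻¹ := by
      rw [hadd, add_comm]
      exact tsub_le_iff_left.1 hn.le
    exact (ENNReal.add_le_add_iff_left haT).1 h3
  refine ⟨(2 * ((n : ℝ≥0∞) + 1))⁻¹, ?_, fun S hS hμS => ?_⟩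
  · rw [ENNReal.inv_pos]
    exact ENNReal.mul_ne_top ENNReal.ofNat_ne_top
      (ENNReal.add_ne_top.2 ⟨ENNReal.natCast_ne_top n, one_ne_top⟩)
  calc ∫⁻ x in S, f x ∂μ
      = ∫⁻ x in S, (min (f x) n + (f x - min (f x) n)) ∂μ := by
        apply lintegral_congr; intro x; rw [add_tsub_cancel_of_le (min_le_left _ _)]
    _ = ∫⁻ x in S, min (f x) n ∂μ + ∫⁻ x in S, (f x - min (f x) n) ∂μ :=
        lintegral_add_left hmin_meas _
    _ ≤ (n : ℝ≥0∞) * μ S + 2⁻¹ := by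
        apply add_le_add
        · calc ∫⁻ x in S, min (f x) n ∂μ ≤ ∫⁻ _ in S, (n : ℝ≥0∞) ∂μ :=
                lintegral_mono fun x => min_le_right _ _
            _ = (n : ℝ≥0∞) * μ S := setLIntegral_const S _
        · exact le_trans (setLIntegral_le_lintegral _ _) hrem
    _ ≤ 2⁻¹ + 2⁻¹ := by
        apply add_le_add_left
        calc (n : ℝ≥0∞) * μ S ≤ (n : ℝ≥0∞) * (2 * ((n : ℝ≥0∞) + 1))⁻¹ :=
              mul_le_mul_right hμS.le _
          _ ≤ 2⁻¹ := by
              rw [ENNReal.mul_inv (by simp) (by simp), ← mul_assoc, mul_comm (n : ℝ≥0∞)]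
              rw [mul_assoc]
              calc 2⁻¹ * ((n : ℝ≥0∞) * ((n : ℝ≥0∞) + 1)⁻¹) ≤ 2⁻¹ * 1 := by
                    apply mul_le_mul_right
                    calc (n : ℝ≥0∞) * ((n : ℝ≥0∞) + 1)⁻¹
                        ≤ ((n : ℝ≥0∞) + 1) * ((n : ℝ≥0∞) + 1)⁻¹ :=
                          mul_le_mul_left le_self_add _
                      _ = 1 := ENNReal.mul_inv_cancel (by simp)
                          (ENNReal.add_ne_top.2 ⟨ENNReal.natCast_ne_top n, one_ne_top⟩)
                _ = 2⁻¹ := mul_one _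
    _ = 1 := by
        rw [← two_mul]
        exact ENNReal.mul_inv_cancel two_ne_zero ENNReal.ofNat_ne_top

lemma aux_level
    {X : Type*} [MetricSpace X] [MeasurableSpace X] [BorelSpace X]
    (μ μt : Measure X) (hle : ∀ S : Set X, μ S ≤ μt S)
    {p : ℝ} (hp : 1 < p)
    (x₀ : X) (r₀ : ℝ) (Cd : ℝ≥0)
    (hCd : DoublingWithinC μt Cd (Metric.ball x₀ (2 * r₀)))
    (E : Set X) (hEB : E ⊆ Metric.ball x₀ r₀) (hE : E.Nonempty)
    (hEfin : codimH μt p E ≠ ⊤)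
    {δ : ℝ} (hδ : 0 < δ) {δ₀ : ℝ≥0∞} (hδ₀ : 0 < δ₀) :
    ∃ (g : X → ℝ≥0∞) (U : Set X), Measurable g ∧ MeasurableSet U ∧
      (∀ y, y ∉ U → g y = 0) ∧ μ U < δ₀ ∧
      (∫⁻ x, g x ^ p ∂μ) ≤ (Cd : ℝ≥0∞) * (codimH μt p E + 1) ∧
      (∀ γ : Curve X, (γ.image ∩ E).Nonempty →
        (∃ y ∈ γ.image, ∃ z ∈ γ.image, δ < dist y z) →
        1 ≤ ∫⁻ s in Set.Icc (0:ℝ) γ.len, g (γ.toFun s)) := by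
  have hppos : (0:ℝ) < p := lt_trans zero_lt_one hp
  have hp0 : p ≠ 0 := hppos.ne'
  obtain ⟨e₀, he₀⟩ := hE
  have hr₀ : 0 < r₀ := lt_of_le_of_lt dist_nonneg (mem_ball.1 (hEB he₀))
  set MM := codimH μt p E with hMM
  have hMM1 : MM + 1 ≠ ⊤ := ENNReal.add_ne_top.2 ⟨hEfin, one_ne_top⟩
  -- choice of the scale R
  set aC := (Cd : ℝ≥0∞) * (MM + 1) with haCdef
  have haC : aC ≠ ⊤ := ENNReal.mul_ne_top coe_ne_top hMM1
  set A := aC.toReal with hAdef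
  have hA0 : 0 ≤ A := ENNReal.toReal_nonneg
  set d := min δ₀ 1 with hddef
  have hd0 : d ≠ 0 := (lt_min hδ₀ zero_lt_one).ne'
  have hdtop : d ≠ ⊤ := ne_top_of_le_ne_top one_ne_top (min_le_right _ _)
  set D := d.toReal with hDdef
  have hD : 0 < D := ENNReal.toReal_pos hd0 hdtop
  set R := min (min (δ/5) (r₀/4)) ((D / (2*(A+1))) ^ p⁻¹) with hRdef
  have hRpos : 0 < R :=
    lt_min (lt_min (by linarith) (by linarith)) (Real.rpow_pos_of_pos (by positivity) _)
  have hRδ : R ≤ δ/5 := le_trans (min_le_left _ _) (min_le_left _ _)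
  have hRr₀ : R ≤ r₀/4 := le_trans (min_le_left _ _) (min_le_right _ _)
  have hRs : aC * ENNReal.ofReal (R ^ p) < δ₀ := by
    have h1 : R ^ p ≤ D / (2*(A+1)) := by
      calc R ^ p ≤ ((D / (2*(A+1))) ^ p⁻¹) ^ p :=
            Real.rpow_le_rpow hRpos.le (min_le_right _ _) hppos.le
        _ = D / (2*(A+1)) := Real.rpow_inv_rpow (by positivity) hp0
    calc aC * ENNReal.ofReal (R ^ p)
        ≤ ENNReal.ofReal A * ENNReal.ofReal (D/(2*(A+1))) := by
          rw [← ENNReal.ofReal_toReal haC]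
          exact mul_le_mul_right (ENNReal.ofReal_le_ofReal h1) _
      _ = ENNReal.ofReal (A * (D/(2*(A+1)))) := (ENNReal.ofReal_mul hA0).symm
      _ ≤ ENNReal.ofReal (D/2) := by
          apply ENNReal.ofReal_le_ofReal
          have h2 : (0:ℝ) < 2*(A+1) := by linarith
          rw [mul_div_assoc', div_le_div_iff₀ h2 (by norm_num : (0:ℝ) < 2)]
          nlinarith
      _ < ENNReal.ofReal D := by
          rw [ENNReal.ofReal_lt_ofReal_iff hD]
          linarith
      _ = d := ENNReal.ofReal_toReal hdtop
      _ ≤ δ₀ := min_le_left _ _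
  -- get a cover of E at scale R
  have hcont : codimHContent μt p R E < MM + 1 := by
    have h1 : codimHContent μt p R E ≤ MM :=
      le_iSup₂ (f := fun (R : ℝ) (_ : 0 < R) => codimHContent μt p R E) R hRpos
    exact lt_of_le_of_lt h1 (ENNReal.lt_add_right hEfin one_ne_zero)
  simp only [codimHContent] at hcont
  rw [iInf_lt_iff] at hcont
  obtain ⟨I, hcont⟩ := hcont
  rw [iInf_lt_iff] at hcont
  obtain ⟨hIc, hcont⟩ := hcont
  rw [iInf_lt_iff] at hcont
  obtain ⟨hIball, hcont⟩ := hcont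
  rw [iInf_lt_iff] at hcont
  obtain ⟨hIcov, hIsum⟩ := hcont
  -- prune the cover to balls meeting E
  set I' := {b ∈ I | (Metric.ball b.1 b.2 ∩ E).Nonempty} with hI'def
  have hI'c : I'.Countable := hIc.mono (sep_subset _ _)
  haveI : Countable ↥I' := hI'c.to_subtype
  set F : X × ℝ → ℝ≥0∞ := fun q => μt (Metric.ball q.1 q.2) / ENNReal.ofReal (q.2 ^ p)
    with hFdef
  have hI'sum : ∑' b : ↥I', F ↑b ≤ MM + 1 := by
    refine le_trans (ENNReal.tsum_mono_subtype F (sep_subset _ _)) ?_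
    exact le_of_lt hIsum
  have hI'cov : E ⊆ ⋃ b ∈ I', Metric.ball b.1 b.2 := by
    intro e he
    obtain ⟨b, hbI, heb⟩ := mem_iUnion₂.1 (hIcov he)
    exact mem_iUnion₂.2 ⟨b, ⟨hbI, ⟨e, heb, he⟩⟩, heb⟩
  -- per ball facts
  have hbr : ∀ b : ↥I', 0 < (b : X × ℝ).2 ∧ (b : X × ℝ).2 ≤ R :=
    fun b => hIball _ b.2.1
  have hsubB₀ : ∀ b : ↥I', Metric.ball (b : X × ℝ).1 (b : X × ℝ).2 ⊆
      Metric.ball x₀ (2 * r₀) := by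
    intro b v hv
    obtain ⟨e, heb, heE⟩ := b.2.2
    have h1 : dist v (b : X × ℝ).1 < (b : X × ℝ).2 := mem_ball.1 hv
    have h2 : dist e (b : X × ℝ).1 < (b : X × ℝ).2 := mem_ball.1 heb
    have h3 : dist e x₀ < r₀ := mem_ball.1 (hEB heE)
    have h4 : (b : X × ℝ).2 ≤ r₀/4 := le_trans (hbr b).2 hRr₀
    have := dist_triangle v (b : X × ℝ).1 x₀
    have := dist_triangle (b : X × ℝ).1 e x₀
    have := dist_comm (b : X × ℝ).1 e
    rw [mem_ball]
    have h5 : dist (b : X × ℝ).1 e = dist e (b : X × ℝ).1 := dist_comm _ _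
    nlinarith [dist_triangle v (b : X × ℝ).1 x₀, dist_triangle (b : X × ℝ).1 e x₀]
  have hdb : ∀ b : ↥I',
      μt (Metric.ball (b : X × ℝ).1 (2 * (b : X × ℝ).2)) ≤
        (Cd : ℝ≥0∞) * μt (Metric.ball (b : X × ℝ).1 (b : X × ℝ).2) ∧
      μt (Metric.ball (b : X × ℝ).1 (2 * (b : X × ℝ).2)) < ⊤ := by
    intro b
    obtain ⟨h1, h2, h3⟩ := hCd (b : X × ℝ).1 (b : X × ℝ).2 (hbr b).1 (hsubB₀ b)
    exact ⟨h2, h3⟩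
  have hofr : ∀ b : ↥I', ENNReal.ofReal ((b : X × ℝ).2 ^ p) ≠ 0 ∧
      ENNReal.ofReal ((b : X × ℝ).2 ^ p) ≠ ⊤ := by
    intro b
    constructor
    · simp only [ne_eq, ENNReal.ofReal_eq_zero, not_le]
      exact Real.rpow_pos_of_pos (hbr b).1 _
    · exact ofReal_ne_top
  have hμtB : ∀ b : ↥I',
      μt (Metric.ball (b : X × ℝ).1 (b : X × ℝ).2) ≤ F ↑b * ENNReal.ofReal (R ^ p) := by
    intro b
    have h1 : μt (Metric.ball (b : X × ℝ).1 (b : X × ℝ).2) =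
        F ↑b * ENNReal.ofReal ((b : X × ℝ).2 ^ p) :=
      (ENNReal.div_mul_cancel (hofr b).1 (hofr b).2).symm
    rw [h1]
    apply mul_le_mul_right
    exact ENNReal.ofReal_le_ofReal (Real.rpow_le_rpow (hbr b).1.le (hbr b).2 hppos.le)
  -- the function g and its support U
  set h : ↥I' → X → ℝ≥0∞ := fun b =>
    (Metric.ball (b : X × ℝ).1 (2 * (b : X × ℝ).2)).indicator
      (fun _ => (ENNReal.ofReal (b : X × ℝ).2)⁻¹) with hhdef
  set g : X → ℝ≥0∞ := fun y => ⨆ b : ↥I', h b y with hgdef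
  set U := ⋃ b : ↥I', Metric.ball (b : X × ℝ).1 (2 * (b : X × ℝ).2) with hUdef
  have hgm : Measurable g :=
    Measurable.iSup fun b => Measurable.indicator measurable_const measurableSet_ball
  have hUm : MeasurableSet U := (isOpen_iUnion fun b => isOpen_ball).measurableSet
  have hg0 : ∀ y, y ∉ U → g y = 0 := by
    intro y hy
    have : ∀ b : ↥I', h b y = 0 := by
      intro b
      apply indicator_of_notMem
      exact fun hyb => hy (mem_iUnion.2 ⟨b, hyb⟩)
    simp only [hgdef, this, iSup_zero]  -- may need fixing
  refine ⟨g, U, hgm, hUm, hg0, ?_, ?_, ?_⟩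
  · -- μ U < δ₀
    calc μ U ≤ μt U := hle U
      _ ≤ ∑' b : ↥I', μt (Metric.ball (b : X × ℝ).1 (2 * (b : X × ℝ).2)) :=
          measure_iUnion_le _
      _ ≤ ∑' b : ↥I', (Cd : ℝ≥0∞) * (F ↑b * ENNReal.ofReal (R ^ p)) := by
          apply ENNReal.tsum_le_tsum
          intro b
          exact le_trans (hdb b).1 (mul_le_mul_right (hμtB b) _)
      _ = (Cd : ℝ≥0∞) * ((∑' b : ↥I', F ↑b) * ENNReal.ofReal (R ^ p)) := by
          rw [ENNReal.tsum_mul_left, ENNReal.tsum_mul_right]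
      _ ≤ (Cd : ℝ≥0∞) * ((MM + 1) * ENNReal.ofReal (R ^ p)) :=
          mul_le_mul_right (mul_le_mul_left hI'sum _) _
      _ = aC * ENNReal.ofReal (R ^ p) := by rw [haCdef, mul_assoc]
      _ < δ₀ := hRs
  · -- energy
    have hhp : ∀ b : ↥I', (fun y => h b y ^ p) =
        (Metric.ball (b : X × ℝ).1 (2 * (b : X × ℝ).2)).indicator
          (fun _ => (ENNReal.ofReal ((b : X × ℝ).2 ^ p))⁻¹) := by
      intro b
      funext y
      by_cases hy : y ∈ Metric.ball (b : X × ℝ).1 (2 * (b : X × ℝ).2)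
      · rw [hhdef]
        simp only [indicator_of_mem hy]
        rw [← ENNReal.ofReal_rpow_of_pos (hbr b).1, ← ENNReal.inv_rpow]
      · rw [hhdef]
        simp only [indicator_of_notMem hy]
        exact ENNReal.zero_rpow_of_pos hppos
    have hgple : ∀ y, g y ^ p ≤ ∑' b : ↥I', h b y ^ p := by
      intro y
      have h1 : g y ≤ (∑' b : ↥I', h b y ^ p) ^ p⁻¹ := by
        apply iSup_le
        intro b
        calc h b y = ((h b y) ^ p) ^ p⁻¹ := by
              rw [← ENNReal.rpow_mul, mul_inv_cancel₀ hp0, ENNReal.rpow_one]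
          _ ≤ (∑' b : ↥I', h b y ^ p) ^ p⁻¹ :=
              ENNReal.rpow_le_rpow (ENNReal.le_tsum b) (inv_nonneg.2 hppos.le)
      calc g y ^ p ≤ ((∑' b : ↥I', h b y ^ p) ^ p⁻¹) ^ p :=
            ENNReal.rpow_le_rpow h1 hppos.le
        _ = ∑' b : ↥I', h b y ^ p := ENNReal.rpow_inv_rpow hp0 _
    calc ∫⁻ x, g x ^ p ∂μ ≤ ∫⁻ x, ∑' b : ↥I', h b x ^ p ∂μ := lintegral_mono hgple
      _ = ∑' b : ↥I', ∫⁻ x, h b x ^ p ∂μ := by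
          apply lintegral_tsum
          intro b
          rw [hhp b]
          exact (Measurable.indicator measurable_const measurableSet_ball).aemeasurable
      _ ≤ ∑' b : ↥I', (Cd : ℝ≥0∞) * F ↑b := by
          apply ENNReal.tsum_le_tsum
          intro b
          rw [hhp b, lintegral_indicator measurableSet_ball, setLIntegral_const]
          calc (ENNReal.ofReal ((b : X × ℝ).2 ^ p))⁻¹ *
                μ (Metric.ball (b : X × ℝ).1 (2 * (b : X × ℝ).2))
              ≤ (ENNReal.ofReal ((b : X × ℝ).2 ^ p))⁻¹ *
                ((Cd : ℝ≥0∞) * μt (Metric.ball (b : X × ℝ).1 (b : X × ℝ).2)) := by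
                apply mul_le_mul_right
                exact le_trans (hle _) (hdb b).1
            _ = (Cd : ℝ≥0∞) * F ↑b := by
                rw [hFdef]
                simp only []
                rw [div_eq_mul_inv]
                ring
      _ = (Cd : ℝ≥0∞) * ∑' b : ↥I', F ↑b := ENNReal.tsum_mul_left
      _ ≤ (Cd : ℝ≥0∞) * (MM + 1) := mul_le_mul_right hI'sum _
  · -- admissibility
    intro γ hmeet hdiam
    obtain ⟨x, hximg, hxE⟩ := hmeet
    obtain ⟨y, hyimg, z, hzimg, hyz⟩ := hdiam
    obtain ⟨b0, hb0I', hxb⟩ := mem_iUnion₂.1 (hI'cov hxE)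
    set b : ↥I' := ⟨b0, hb0I'⟩ with hbdef
    set c := (b : X × ℝ).1 with hcdef
    set r := (b : X × ℝ).2 with hrdef
    have hr0 : 0 < r := (hbr b).1
    have hrR : r ≤ R := (hbr b).2
    have h5r : 5 * r ≤ δ := by
      have := hRδ; simp only [hrdef]; linarith
    have hxc : dist x c < r := mem_ball.1 hxb
    -- find the far point w
    have hw : ∃ w ∈ γ.image, 5 * r / 2 < dist w c := by
      by_cases hyc : 5 * r / 2 < dist y c
      · exact ⟨y, hyimg, hyc⟩
      · refine ⟨z, hzimg, ?_⟩
        push_neg at hyc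
        have h1 := dist_triangle y c z
        have h2 : dist c z = dist z c := dist_comm _ _
        linarith
    obtain ⟨w, hwimg, hwc⟩ := hw
    obtain ⟨t₀, ht₀, hxt⟩ := hximg
    obtain ⟨t₁, ht₁, hwt⟩ := hwimg
    have hLip : ∀ s ∈ Set.Icc (0:ℝ) γ.len, ∀ t ∈ Set.Icc (0:ℝ) γ.len,
        dist (γ.toFun s) (γ.toFun t) ≤ dist s t := by
      intro s hs t ht
      have := γ.lipschitz.dist_le_mul s hs t ht
      simpa using this
    have hwx : 3 * r / 2 < dist w x := by
      have h1 := dist_triangle w x c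
      linarith
    have hrt : r < |t₁ - t₀| := by
      have h1 : dist w x ≤ dist t₁ t₀ := by
        rw [← hxt, ← hwt]
        exact hLip t₁ ht₁ t₀ ht₀
      rw [Real.dist_eq] at h1
      linarith
    have hsuff : ∃ J : Set ℝ, MeasurableSet J ∧ J ⊆ Set.Icc (0:ℝ) γ.len ∧
        volume J = ENNReal.ofReal r ∧ ∀ s ∈ J, γ.toFun s ∈ Metric.ball c (2 * r) := by
      rcases le_total t₀ t₁ with hc01 | hc01
      · refine ⟨Set.Icc t₀ (t₀ + r), measurableSet_Icc, ?_, ?_, ?_⟩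
        · have h1 : t₀ + r < t₁ := by
            rw [abs_of_nonneg (by linarith)] at hrt
            linarith
          intro s hs
          exact ⟨le_trans ht₀.1 hs.1, le_trans (le_trans hs.2 h1.le) ht₁.2⟩
        · rw [Real.volume_Icc]; congr 1; ring
        · intro s hs
          have h1 : t₀ + r < t₁ := by
            rw [abs_of_nonneg (by linarith)] at hrt
            linarith
          have hsIcc : s ∈ Set.Icc (0:ℝ) γ.len :=
            ⟨le_trans ht₀.1 hs.1, le_trans (le_trans hs.2 h1.le) ht₁.2⟩
          have h2 : dist (γ.toFun s) x ≤ r := by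
            rw [← hxt]
            refine le_trans (hLip s hsIcc t₀ ht₀) ?_
            rw [Real.dist_eq, abs_of_nonneg (by linarith [hs.1] : (0:ℝ) ≤ s - t₀)]
            linarith [hs.2]
          rw [mem_ball]
          have := dist_triangle (γ.toFun s) x c
          linarith
      · refine ⟨Set.Icc (t₀ - r) t₀, measurableSet_Icc, ?_, ?_, ?_⟩
        · have h1 : t₁ < t₀ - r := by
            rw [abs_of_nonpos (by linarith)] at hrt
            linarith
          intro s hs
          exact ⟨le_trans (le_trans ht₁.1 h1.le) hs.1, le_trans hs.2 ht₀.2⟩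
        · rw [Real.volume_Icc]; congr 1; ring
        · intro s hs
          have h1 : t₁ < t₀ - r := by
            rw [abs_of_nonpos (by linarith)] at hrt
            linarith
          have hsIcc : s ∈ Set.Icc (0:ℝ) γ.len :=
            ⟨le_trans (le_trans ht₁.1 h1.le) hs.1, le_trans hs.2 ht₀.2⟩
          have h2 : dist (γ.toFun s) x ≤ r := by
            rw [← hxt]
            refine le_trans (hLip s hsIcc t₀ ht₀) ?_
            rw [Real.dist_eq, abs_of_nonpos (by linarith [hs.2] : s - t₀ ≤ (0:ℝ))]
            linarith [hs.1]
          rw [mem_ball]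
          have := dist_triangle (γ.toFun s) x c
          linarith
    obtain ⟨J, hJm, hJsub, hvolJ, hJball⟩ := hsuff
    have hone : ((ENNReal.ofReal r)⁻¹ : ℝ≥0∞) * ENNReal.ofReal r = 1 :=
      ENNReal.inv_mul_cancel (by simp [hr0]) ofReal_ne_top
    have hpt : ∀ s : ℝ, J.indicator (fun _ => (ENNReal.ofReal r)⁻¹) s ≤ g (γ.toFun s) := by
      intro s
      by_cases hs : s ∈ J
      · rw [indicator_of_mem hs]
        have h1 : h b (γ.toFun s) = (ENNReal.ofReal r)⁻¹ := by
          rw [hhdef]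
          exact indicator_of_mem (hJball s hs) _
        rw [← h1]
        exact le_iSup (fun b' => h b' (γ.toFun s)) b
      · rw [indicator_of_notMem hs]
        exact zero_le
    calc (1:ℝ≥0∞) = (ENNReal.ofReal r)⁻¹ * volume J := by rw [hvolJ, hone]
      _ = ∫⁻ s, J.indicator (fun _ => (ENNReal.ofReal r)⁻¹) s
            ∂(volume.restrict (Set.Icc (0:ℝ) γ.len)) := by
          rw [lintegral_indicator hJm, setLIntegral_const,
            Measure.restrict_apply hJm, inter_eq_self_of_subset_left hJsub]
      _ ≤ ∫⁻ s in Set.Icc (0:ℝ) γ.len, g (γ.toFun s) := lintegral_mono hpt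

lemma aux_key
    {X : Type*} [MetricSpace X] [MeasurableSpace X] [BorelSpace X]
    (μ μt : Measure X) (hle : ∀ S : Set X, μ S ≤ μt S)
    {p : ℝ} (hp : 1 < p)
    (x₀ : X) (r₀ : ℝ) (Cd : ℝ≥0)
    (hCd : DoublingWithinC μt Cd (Metric.ball x₀ (2 * r₀)))
    (E : Set X) (hEB : E ⊆ Metric.ball x₀ r₀)
    (hEfin : codimH μt p E ≠ ⊤)
    {δ : ℝ} (hδ : 0 < δ) {ε : ℝ≥0∞} (hε : 0 < ε) :
    ∃ ρ : X → ℝ≥0∞, Measurable ρ ∧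
      (∀ γ : Curve X, (γ.image ∩ E).Nonempty →
        (∃ y ∈ γ.image, ∃ z ∈ γ.image, δ < dist y z) → 1 ≤ curveLintegral ρ γ) ∧
      ∫⁻ x, ρ x ^ p ∂μ ≤ ε := by
  have hppos : (0:ℝ) < p := lt_trans zero_lt_one hp
  have hp0 : p ≠ 0 := hppos.ne'
  rcases E.eq_empty_or_nonempty with hEe | hEne
  · refine ⟨fun _ => 0, measurable_const, ?_, ?_⟩
    · intro γ hmeet _
      rw [hEe] at hmeet
      simp at hmeet
    · simp [ENNReal.zero_rpow_of_pos hppos]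
  set MM := codimH μt p E with hMM
  set C0 := (Cd : ℝ≥0∞) * (MM + 1) with hC0
  have hC0top : C0 ≠ ⊤ :=
    ENNReal.mul_ne_top coe_ne_top (ENNReal.add_ne_top.2 ⟨hEfin, one_ne_top⟩)
  set K := (2:ℝ≥0∞)^p * (1 + C0) with hK
  have hKtop : K ≠ ⊤ :=
    ENNReal.mul_ne_top (ENNReal.rpow_ne_top_of_nonneg hppos.le ENNReal.ofNat_ne_top)
      (ENNReal.add_ne_top.2 ⟨one_ne_top, hC0top⟩)
  have main : ∀ l : ℕ, ∃ g : ℕ → X → ℝ≥0∞, (∀ j, Measurable (g j)) ∧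
      (∀ j < l, ∀ γ : Curve X, (γ.image ∩ E).Nonempty →
        (∃ y ∈ γ.image, ∃ z ∈ γ.image, δ < dist y z) →
        1 ≤ ∫⁻ s in Set.Icc (0:ℝ) γ.len, g j (γ.toFun s)) ∧
      ∫⁻ x, (∑ j ∈ Finset.range l, g j x) ^ p ∂μ ≤ (l : ℝ≥0∞) * K := by
    intro l
    induction l with
    | zero =>
      refine ⟨fun _ _ => 0, fun _ => measurable_const,
        fun j hj => absurd hj (Nat.not_lt_zero j), ?_⟩
      simp [ENNReal.zero_rpow_of_pos hppos]
    | succ l ih =>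
      obtain ⟨g, hgm, hgadm, hgsum⟩ := ih
      set S : X → ℝ≥0∞ := fun x => ∑ j ∈ Finset.range l, g j x with hS
      have hSm : Measurable S := Finset.measurable_sum _ fun j _ => hgm j
      have hSpm : Measurable fun x => S x ^ p :=
        (ENNReal.continuous_rpow_const (y := p)).measurable.comp hSm
      have hfin : ∫⁻ x, S x ^ p ∂μ ≠ ⊤ :=
        ne_top_of_le_ne_top (ENNReal.mul_ne_top (ENNReal.natCast_ne_top l) hKtop) hgsum
      obtain ⟨δ₀, hδ₀, habs⟩ := aux_abscont μ _ hSpm hfin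
      obtain ⟨gn, U, hgnm, hUm, hg0, hμU, hen, hadm⟩ :=
        aux_level μ μt hle hp x₀ r₀ Cd hCd E hEB hEne hEfin hδ hδ₀
      refine ⟨Function.update g l gn, ?_, ?_, ?_⟩
      · intro j
        rcases eq_or_ne j l with rfl | hj
        · rw [Function.update_self]; exact hgnm
        · rw [Function.update_of_ne hj]; exact hgm j
      · intro j hj γ h1 h2
        rcases Nat.lt_succ_iff_lt_or_eq.1 hj with hj' | rfl
        · rw [Function.update_of_ne (Nat.ne_of_lt hj')]
          exact hgadm j hj' γ h1 h2
        · rw [Function.update_self]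
          exact hadm γ h1 h2
      · have hsum_eq : ∀ x : X,
            (∑ j ∈ Finset.range (l+1), Function.update g l gn j x) = S x + gn x := by
          intro x
          rw [Finset.sum_range_succ, Function.update_self]
          congr 1
          apply Finset.sum_congr rfl
          intro j hj
          rw [Function.update_of_ne (Nat.ne_of_lt (Finset.mem_range.1 hj))]
        have key : ∫⁻ x, (S x + gn x) ^ p ∂μ ≤ ((l:ℝ≥0∞)+1) * K := by
          rw [← lintegral_add_compl (fun x => (S x + gn x)^p) hUm]
          have hUc : ∫⁻ x in Uᶜ, (S x + gn x)^p ∂μ ≤ (l:ℝ≥0∞) * K := by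
            have heq : ∫⁻ x in Uᶜ, (S x + gn x)^p ∂μ = ∫⁻ x in Uᶜ, S x ^p ∂μ := by
              apply setLIntegral_congr_fun hUm.compl
              intro x hx
              simp only []
              rw [hg0 x hx, add_zero]
            rw [heq]
            exact le_trans (setLIntegral_le_lintegral _ _) hgsum
          have hU : ∫⁻ x in U, (S x + gn x)^p ∂μ ≤ K := by
            calc ∫⁻ x in U, (S x + gn x)^p ∂μ
                ≤ ∫⁻ x in U, 2^p * (S x ^p + gn x ^p) ∂μ :=
                  lintegral_mono fun x => aux_rpow_sum_le _ _ hppos.le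
              _ = 2^p * (∫⁻ x in U, S x ^p ∂μ + ∫⁻ x in U, gn x ^p ∂μ) := by
                  rw [lintegral_const_mul' _ _
                    (ENNReal.rpow_ne_top_of_nonneg hppos.le ENNReal.ofNat_ne_top),
                    lintegral_add_left hSpm]
              _ ≤ 2^p * (1 + C0) := by
                  apply mul_le_mul_right
                  apply add_le_add
                  · exact habs U hUm hμU
                  · exact le_trans (setLIntegral_le_lintegral _ _) hen
              _ = K := hK.symm
          calc ∫⁻ x in U, (S x + gn x)^p ∂μ + ∫⁻ x in Uᶜ, (S x + gn x)^p ∂μ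
              ≤ K + (l:ℝ≥0∞) * K := add_le_add hU hUc
            _ = ((l:ℝ≥0∞)+1) * K := by ring
        have heqf : (fun x => (∑ j ∈ Finset.range (l+1), Function.update g l gn j x) ^ p)
            = fun x => (S x + gn x)^p := by funext x; rw [hsum_eq x]
        rw [show (((l+1 : ℕ)) : ℝ≥0∞) = (l:ℝ≥0∞)+1 by push_cast; ring]
        calc ∫⁻ x, (∑ j ∈ Finset.range (l+1), Function.update g l gn j x) ^ p ∂μ
            = ∫⁻ x, (S x + gn x)^p ∂μ := by rw [heqf]
          _ ≤ _ := key
  have hL : ∃ L : ℕ, 0 < L ∧ K * (((L:ℝ≥0∞)) ^ (p-1))⁻¹ ≤ ε := by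
    rcases eq_or_ne ε ⊤ with rfl | hεtop
    · exact ⟨1, one_pos, le_top⟩
    · have hq : (0:ℝ) < p - 1 := by linarith
      set B := K / ε with hB
      have hBtop : B ≠ ⊤ := (ENNReal.div_lt_top hKtop hε.ne').ne
      have hBq : B ^ (p-1)⁻¹ ≠ ⊤ :=
        ENNReal.rpow_ne_top_of_nonneg (inv_nonneg.2 hq.le) hBtop
      obtain ⟨n, hn⟩ := ENNReal.exists_nat_gt hBq
      have hn0 : n ≠ 0 := by
        rintro rfl
        simp at hn
      refine ⟨n, Nat.pos_of_ne_zero hn0, ?_⟩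
      have hnn0 : ((n:ℝ≥0∞)) ≠ 0 := Nat.cast_ne_zero.2 hn0
      have hBlt : B < ((n:ℝ≥0∞)) ^ (p-1) := by
        calc B = (B ^ (p-1)⁻¹) ^ (p-1) := (ENNReal.rpow_inv_rpow hq.ne' _).symm
          _ < ((n:ℝ≥0∞)) ^ (p-1) := ENNReal.rpow_lt_rpow hn hq
      have hT0 : ((n:ℝ≥0∞)) ^ (p-1) ≠ 0 :=
        (ENNReal.rpow_pos (by positivity) (ENNReal.natCast_ne_top n)).ne'
      have hTtop : ((n:ℝ≥0∞)) ^ (p-1) ≠ ⊤ :=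
        ENNReal.rpow_ne_top_of_nonneg hq.le (ENNReal.natCast_ne_top n)
      rw [← div_eq_mul_inv, ENNReal.div_le_iff hT0 hTtop]
      have hlt := (ENNReal.div_lt_iff (Or.inl hε.ne') (Or.inl hεtop)).1 hBlt
      calc K ≤ ((n:ℝ≥0∞))^(p-1) * ε := hlt.le
        _ = ε * ((n:ℝ≥0∞))^(p-1) := mul_comm _ _
  obtain ⟨L, hL0, hLε⟩ := hL
  obtain ⟨g, hgm, hgadm, hgsum⟩ := main L
  set S : X → ℝ≥0∞ := fun x => ∑ j ∈ Finset.range L, g j x with hS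
  have hSm : Measurable S := Finset.measurable_sum _ fun j _ => hgm j
  have hLne0 : ((L:ℝ≥0∞)) ≠ 0 := Nat.cast_ne_zero.2 hL0.ne'
  have hLnetop : ((L:ℝ≥0∞)) ≠ ⊤ := ENNReal.natCast_ne_top L
  refine ⟨fun x => (L:ℝ≥0∞)⁻¹ * S x, hSm.const_mul _, ?_, ?_⟩
  · intro γ hmeet hdiam
    have hγae : AEMeasurable γ.toFun (volume.restrict (Set.Icc (0:ℝ) γ.len)) :=
      (γ.lipschitz.continuousOn).aemeasurable measurableSet_Icc
    have hsplit : ∫⁻ s in Set.Icc (0:ℝ) γ.len, S (γ.toFun s) =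
        ∑ j ∈ Finset.range L, ∫⁻ s in Set.Icc (0:ℝ) γ.len, g j (γ.toFun s) :=
      lintegral_finset_sum' _ fun j _ => ((hgm j).comp_aemeasurable hγae)
    have hsum_ge : ((L:ℝ≥0∞)) ≤ ∫⁻ s in Set.Icc (0:ℝ) γ.len, S (γ.toFun s) := by
      rw [hsplit]
      calc ((L:ℝ≥0∞)) = ∑ _j ∈ Finset.range L, (1:ℝ≥0∞) := by simp
        _ ≤ _ := Finset.sum_le_sum fun j hj =>
            hgadm j (Finset.mem_range.1 hj) γ hmeet hdiam
    show (1:ℝ≥0∞) ≤ ∫⁻ s in Set.Icc (0:ℝ) γ.len, (L:ℝ≥0∞)⁻¹ * S (γ.toFun s)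
    rw [lintegral_const_mul' _ _ (ENNReal.inv_ne_top.2 hLne0)]
    calc (1:ℝ≥0∞) = (L:ℝ≥0∞)⁻¹ * (L:ℝ≥0∞) := (ENNReal.inv_mul_cancel hLne0 hLnetop).symm
      _ ≤ _ := mul_le_mul_right hsum_ge _
  · calc ∫⁻ x, ((L:ℝ≥0∞)⁻¹ * S x) ^ p ∂μ
        = ∫⁻ x, ((L:ℝ≥0∞)⁻¹)^p * S x ^ p ∂μ := by
          apply lintegral_congr; intro x; rw [ENNReal.mul_rpow_of_nonneg _ _ hppos.le]
      _ = ((L:ℝ≥0∞)⁻¹)^p * ∫⁻ x, S x ^ p ∂μ :=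
          lintegral_const_mul' _ _
            (ENNReal.rpow_ne_top_of_nonneg hppos.le (ENNReal.inv_ne_top.2 hLne0))
      _ ≤ ((L:ℝ≥0∞)⁻¹)^p * ((L:ℝ≥0∞) * K) := mul_le_mul_right hgsum _
      _ = K * (((L:ℝ≥0∞)) ^ (p-1))⁻¹ := by
          rw [ENNReal.inv_rpow, ← ENNReal.rpow_neg, ← mul_assoc]
          have h2 : (L:ℝ≥0∞)^(-p) * (L:ℝ≥0∞) = (((L:ℝ≥0∞))^(p-1))⁻¹ := by
            nth_rewrite 2 [← ENNReal.rpow_one (L:ℝ≥0∞)]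
            rw [← ENNReal.rpow_add _ _ hLne0 hLnetop,
              show -p + 1 = -(p-1) by ring, ENNReal.rpow_neg]
          rw [h2, mul_comm]
      _ ≤ ε := hLε

/-- Lemma 3.5: if `ℋ̃^p(E) < ∞`, then `p`-a.e. curve meets `E` in at most
finitely many points. -/
theorem mod_p_infinite_intersection
    {X : Type*} [MetricSpace X] [MeasurableSpace X] [BorelSpace X]
    [ConnectedSpace X] [Nontrivial X]
    (μ : Measure X) (hμball : ∀ (x : X) (r : ℝ), μ (Metric.ball x r) < ⊤)
    (p : ℝ) (hp : 1 < p)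
    (Ω : Set X) (hΩopen : IsOpen Ω)
    (μt : Measure X) (hle : ∀ S : Set X, μ S ≤ μt S)
    (x₀ : X) (r₀ : ℝ) (hΩB₀ : Ω ⊆ Metric.ball x₀ r₀)
    (hdbl : DoublingWithin μt (Metric.ball x₀ (2 * r₀)))
    (E : Set X) (hEΩ : E ⊆ Ω) (hEfin : codimH μt p E < ⊤) :
    pModulus p μ {γ : Curve X | γ.In Ω ∧ (γ.image ∩ E).Infinite} = 0 := by
  obtain ⟨Cd, hCd⟩ := hdbl
  have hEB : E ⊆ Metric.ball x₀ r₀ := fun x hx => hΩB₀ (hEΩ hx)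
  have hppos : (0:ℝ) < p := lt_trans zero_lt_one hp
  have hp0 : p ≠ 0 := hppos.ne'
  apply le_antisymm _ zero_le
  apply ENNReal.le_of_forall_pos_le_add
  intro ε hε _
  rw [zero_add]
  have hkey : ∀ m : ℕ, ∃ ρ : X → ℝ≥0∞, Measurable ρ ∧
      (∀ γ : Curve X, (γ.image ∩ E).Nonempty →
        (∃ y ∈ γ.image, ∃ z ∈ γ.image, (((m:ℝ)+1))⁻¹ < dist y z) →
        1 ≤ curveLintegral ρ γ) ∧
      ∫⁻ x, ρ x ^ p ∂μ ≤ (ε : ℝ≥0∞) * 2⁻¹ ^ (m+1) := by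
    intro m
    apply aux_key μ μt hle hp x₀ r₀ Cd hCd E hEB hEfin.ne
    · positivity
    · exact ENNReal.mul_pos (by exact_mod_cast hε.ne')
        (pow_ne_zero _ (ENNReal.inv_ne_zero.2 ENNReal.ofNat_ne_top))
  choose ρm hρmm hρma hρme using hkey
  set ρ : X → ℝ≥0∞ := fun x => (∑' m : ℕ, ρm m x ^ p) ^ p⁻¹ with hρ
  have hρmeas : Measurable ρ := by
    apply Measurable.comp (ENNReal.continuous_rpow_const (y := p⁻¹)).measurable
    exact Measurable.ennreal_tsum fun m =>
      (ENNReal.continuous_rpow_const (y := p)).measurable.comp (hρmm m)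
  have hρge : ∀ (m : ℕ) (x : X), ρm m x ≤ ρ x := by
    intro m x
    calc ρm m x = ((ρm m x) ^ p) ^ p⁻¹ := by
          rw [← ENNReal.rpow_mul, mul_inv_cancel₀ hp0, ENNReal.rpow_one]
      _ ≤ ρ x := ENNReal.rpow_le_rpow (ENNReal.le_tsum m) (inv_nonneg.2 hppos.le)
  have hadm : ∀ γ ∈ {γ : Curve X | γ.In Ω ∧ (γ.image ∩ E).Infinite},
      1 ≤ curveLintegral ρ γ := by
    intro γ hγ
    obtain ⟨-, hinf⟩ := hγ
    obtain ⟨y, hy, z, hz, hyz⟩ := hinf.nontrivial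
    have hd : 0 < dist y z := dist_pos.2 hyz
    obtain ⟨m, hm⟩ := exists_nat_one_div_lt hd
    have h1 : 1 ≤ curveLintegral (ρm m) γ := by
      apply hρma m γ ⟨y, hy⟩
      exact ⟨y, hy.1, z, hz.1, by rw [← one_div]; exact hm⟩
    refine le_trans h1 (lintegral_mono fun s => hρge m _)
  have hsum : ∫⁻ x, ρ x ^ p ∂μ ≤ (ε : ℝ≥0∞) := by
    have h1 : ∀ x, ρ x ^ p = ∑' m : ℕ, ρm m x ^ p := fun x =>
      ENNReal.rpow_inv_rpow hp0 _
    calc ∫⁻ x, ρ x ^ p ∂μ = ∫⁻ x, ∑' m : ℕ, ρm m x ^ p ∂μ := lintegral_congr h1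
      _ = ∑' m : ℕ, ∫⁻ x, ρm m x ^ p ∂μ := lintegral_tsum fun m =>
          ((ENNReal.continuous_rpow_const (y := p)).measurable.comp (hρmm m)).aemeasurable
      _ ≤ ∑' m : ℕ, (ε : ℝ≥0∞) * 2⁻¹ ^ (m+1) := ENNReal.tsum_le_tsum fun m => hρme m
      _ = (ε : ℝ≥0∞) * ∑' m : ℕ, (2⁻¹ : ℝ≥0∞) ^ (m+1) := ENNReal.tsum_mul_left
      _ = (ε : ℝ≥0∞) := by
          rw [ENNReal.tsum_geometric_add_one, ENNReal.one_sub_inv_two, inv_inv,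
            ENNReal.inv_mul_cancel two_ne_zero ENNReal.ofNat_ne_top, mul_one]
  have hdef : pModulus p μ {γ : Curve X | γ.In Ω ∧ (γ.image ∩ E).Infinite} =
      ⨅ (ρ' : X → ℝ≥0∞) (_ : Measurable ρ')
        (_ : ∀ γ ∈ {γ : Curve X | γ.In Ω ∧ (γ.image ∩ E).Infinite},
          1 ≤ curveLintegral ρ' γ),
        ∫⁻ x, ρ' x ^ p ∂μ := rfl
  rw [hdef]
  refine le_trans (iInf_le_of_le ρ (iInf_le_of_le hρmeas (iInf_le_of_le hadm le_rfl))) hsum
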